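/- Let b and d be natural numbers and a, c integers with gcd(a,b) = gcd(c,d) = 1 and a/b ≠ c/d. Let q = a·d − b·c and let ε be the sign of q. Let j, k be integers with −c·j + d·k = 1, and set r = a·j − b·k. Then S(a,b) = S(c,d) + ε·S(r, |q|) + (b² + d² + q²)/(b·d·q) − 3ε. -/

import Mathlib

/-- The sawtooth function `((x))`: `x - ⌊x⌋ - 1/2` if `x ∉ ℤ`, and `0` if `x ∈ ℤ`. -/
noncomputable def saw (x : ℝ) : ℝ := if Int.fract x = 0 then 0 else x - ⌊x⌋ - 1/2

/-- The classical Dedekind sum `s(a,b) = ∑_{k=1}^b ((k/b)) ((a k / b))`. -/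
noncomputable def dedekindSum (a : ℤ) (b : ℕ) : ℝ :=
  ∑ k ∈ Finset.Icc 1 b, saw ((k : ℝ) / b) * saw ((a : ℝ) * k / b)

/-- The normalized Dedekind sum `S(a,b) = 12 s(a,b)`. -/
noncomputable def S (a : ℤ) (b : ℕ) : ℝ := 12 * dedekindSum a b





lemma saw_eq_fract (x : ℝ) : saw x = if Int.fract x = 0 then 0 else Int.fract x - 1/2 := by
  unfold saw Int.fract; ring_nf

lemma saw_intCast (n : ℤ) : saw (n : ℝ) = 0 := by
  simp [saw_eq_fract]

lemma saw_neg (x : ℝ) : saw (-x) = -saw x := by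
  rcases eq_or_ne (Int.fract x) 0 with h | h
  · rw [saw_eq_fract, saw_eq_fract, h, Int.fract_neg_eq_zero.mpr h]; simp
  · have h2 : Int.fract (-x) = 1 - Int.fract x := Int.fract_neg h
    have h3 : Int.fract (-x) ≠ 0 := by
      rw [h2]
      have := Int.fract_lt_one x
      intro hc; nlinarith [Int.fract_nonneg x]
    rw [saw_eq_fract, saw_eq_fract, if_neg h, if_neg h3, h2]; ring

lemma saw_add_int (x : ℝ) (n : ℤ) : saw (x + n) = saw x := by
  rw [saw_eq_fract, saw_eq_fract, Int.fract_add_intCast]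

lemma saw_nonint (x : ℝ) (h : Int.fract x ≠ 0) : saw x = Int.fract x - 1/2 := by
  rw [saw_eq_fract, if_neg h]

lemma dedekindSum_neg (a : ℤ) (b : ℕ) : dedekindSum (-a) b = - dedekindSum a b := by
  unfold dedekindSum
  rw [← Finset.sum_neg_distrib]
  apply Finset.sum_congr rfl
  intro k _
  have : ((-a : ℤ) : ℝ) * k / b = -((a:ℝ) * k / b) := by push_cast; ring
  rw [this, saw_neg]; ring

lemma dedekindSum_zero_left (b : ℕ) : dedekindSum 0 b = 0 := by
  unfold dedekindSum
  apply Finset.sum_eq_zero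
  intro k _
  have : ((0 : ℤ) : ℝ) * k / b = ((0:ℤ) : ℝ) := by push_cast; ring
  rw [this, saw_intCast]; ring

lemma dedekindSum_add_int_mul (a : ℤ) (b : ℕ) (m : ℤ) :
    dedekindSum (a + m * b) b = dedekindSum a b := by
  unfold dedekindSum
  apply Finset.sum_congr rfl
  intro k hk
  rcases Nat.eq_zero_or_pos b with rfl | hb
  · simp at hk
  congr 1
  have : ((a + m * b : ℤ) : ℝ) * k / b = (a:ℝ) * k / b + ((m * k : ℤ) : ℝ) := by
    push_cast
    field_simp
  rw [this, saw_add_int]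

lemma S_neg (a : ℤ) (b : ℕ) : S (-a) b = - S a b := by
  unfold S; rw [dedekindSum_neg]; ring

lemma S_zero_left (b : ℕ) : S 0 b = 0 := by unfold S; rw [dedekindSum_zero_left]; ring

lemma S_add_int_mul (a : ℤ) (b : ℕ) (m : ℤ) : S (a + m * b) b = S a b := by
  unfold S; rw [dedekindSum_add_int_mul]

lemma dedekindSum_one_right (a : ℤ) : dedekindSum a 1 = 0 := by
  unfold dedekindSum
  rw [show Finset.Icc 1 1 = {1} from rfl]
  rw [Finset.sum_singleton]
  have : ((1:ℕ) : ℝ)/(1:ℕ) = ((1:ℤ):ℝ) := by norm_num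
  rw [this, saw_intCast]; ring

lemma S_one_right (a : ℤ) : S a 1 = 0 := by unfold S; rw [dedekindSum_one_right]; ring


lemma sum_Ico_id_mul_two (b : ℕ) : (∑ k ∈ Finset.Ico 1 b, (k:ℤ)) * 2 = b * (b-1) := by
  induction b with
  | zero => simp
  | succ n ih =>
    rcases Nat.eq_zero_or_pos n with rfl|hn
    · simp
    rw [Finset.sum_Ico_succ_top hn]
    push_cast
    push_cast at ih
    linarith

lemma sum_Ico_sq_mul_six (b : ℕ) :
    (∑ k ∈ Finset.Ico 1 b, (k:ℤ)^2) * 6 = b * (b-1) * (2*b-1) := by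
  induction b with
  | zero => simp
  | succ n ih =>
    rcases Nat.eq_zero_or_pos n with rfl|hn
    · simp
    rw [Finset.sum_Ico_succ_top hn]
    push_cast
    push_cast at ih
    linarith [sq_nonneg ((n:ℤ))]

lemma sum_mod_perm (a : ℤ) (b : ℕ) (hb : 0 < b) (hab : IsCoprime a (b:ℤ)) (g : ℤ → ℤ) :
    ∑ k ∈ Finset.Ico 1 b, g ((a * k) % (b:ℤ)) = ∑ k ∈ Finset.Ico 1 b, g (k:ℤ) := by
  obtain ⟨u, v, huv⟩ := hab
  have hbz : (b:ℤ) ≠ 0 := by positivity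
  have hbz' : (0:ℤ) < b := by exact_mod_cast hb
  -- key residue computations
  have key : ∀ w z : ℤ, w * a + v * b = 1 → ∀ k : ℕ, k ∈ Finset.Ico 1 b →
      True := fun _ _ _ _ _ => trivial
  have mem : ∀ (w : ℤ), IsCoprime w (b:ℤ) → ∀ k ∈ Finset.Ico 1 b, ((w * k) % b).toNat ∈ Finset.Ico 1 b := by
    intro w hw k hk
    simp only [Finset.mem_Ico] at hk ⊢
    have h0 : 0 ≤ (w * k) % b := Int.emod_nonneg _ hbz
    have h1 : (w * k) % b < b := Int.emod_lt_of_pos _ hbz'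
    have hne : (w * k) % b ≠ 0 := by
      intro hzero
      have hdvd : (b:ℤ) ∣ w * k := Int.dvd_of_emod_eq_zero hzero
      have : (b:ℤ) ∣ (k:ℤ) := (hw.symm).dvd_of_dvd_mul_left hdvd
      have : b ∣ k := by exact_mod_cast this
      have := Nat.le_of_dvd (by omega) this
      omega
    omega
  have hua : IsCoprime u (b:ℤ) := ⟨a, v, by linarith⟩
  have hab' : IsCoprime a (b:ℤ) := ⟨u, v, by linarith⟩
  have linv : ∀ w w' : ℤ, w' * (w * 1) % (1:ℤ) = 0 := by intros; simp
  have cancel : ∀ (w w' : ℤ), w' * w % b = 1 % b → ∀ k ∈ Finset.Ico 1 b,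
      ((w' * (((w * k) % b)).toNat) % b).toNat = k := by
    intro w w' hww k hk
    simp only [Finset.mem_Ico] at hk
    have h0 : 0 ≤ (w * k) % b := Int.emod_nonneg _ hbz
    have e1 : ((((w * k) % b)).toNat : ℤ) = (w * k) % b := Int.toNat_of_nonneg h0
    have e2 : (w' * (((w * k) % b)).toNat) % b = (w' * (w * k)) % b := by
      rw [e1, Int.mul_emod, Int.emod_emod_of_dvd _ dvd_rfl, ← Int.mul_emod]
    have e3 : (w' * (w * k)) % b = (k:ℤ) % b := by
      rw [show w' * (w * k) = (w' * w) * k by ring, Int.mul_emod, hww, ← Int.mul_emod]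
      ring_nf
    have e4 : (k:ℤ) % b = k := Int.emod_eq_of_lt (by positivity) (by exact_mod_cast hk.2)
    rw [e2, e3, e4]
    simp
  have hu_mod : u * a % b = 1 % b := by
    conv_rhs => rw [show (1:ℤ) = u * a + v * b by linarith]
    rw [Int.add_mul_emod_self_right]
  have ha_mod : a * u % b = 1 % b := by rw [mul_comm]; exact hu_mod
  refine Finset.sum_nbij' (fun k => ((a * k) % b).toNat) (fun k => ((u * k) % b).toNat)
    (mem a hab') (mem u hua) ?_ ?_ ?_
  · intro k hk; exact cancel a u hu_mod k hk
  · intro k hk; exact cancel u a ha_mod k hk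
  · intro k hk
    congr 1
    exact (Int.toNat_of_nonneg (Int.emod_nonneg _ hbz)).symm


lemma sum_pairs_max (a : ℕ) (g : ℕ → ℤ) :
    ∑ l ∈ Finset.Ico 1 a, ∑ l' ∈ Finset.Ico 1 a, g (max l l')
      = ∑ m ∈ Finset.Ico 1 a, (2*(m:ℤ)-1) * g m := by
  induction a with
  | zero => simp
  | succ n ih =>
    rcases Nat.eq_zero_or_pos n with rfl|hn
    · simp
    rw [Nat.Ico_succ_right_eq_insert_Ico hn]
    conv_lhs => rw [Finset.sum_insert Finset.right_notMem_Ico]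
    have hmaxn : ∀ l' ∈ Finset.Ico 1 n, max n l' = n := by
      intro l' hl'
      simp only [Finset.mem_Ico] at hl'
      omega
    have h1 : ∑ l' ∈ Finset.Ico 1 n, g (max n l') = (n - 1 : ℤ) * g n := by
      rw [Finset.sum_congr rfl (fun l' hl' => by rw [hmaxn l' hl'])]
      rw [Finset.sum_const, Nat.card_Ico, nsmul_eq_mul, Nat.cast_sub hn, Nat.cast_one]
    have h2 : ∀ l ∈ Finset.Ico 1 n,
        (∑ l' ∈ insert n (Finset.Ico 1 n), g (max l l'))
          = g n + ∑ l' ∈ Finset.Ico 1 n, g (max l l') := by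
      intro l hl
      rw [Finset.sum_insert Finset.right_notMem_Ico]
      simp only [Finset.mem_Ico] at hl
      rw [show max l n = n by omega]
    rw [Finset.sum_congr rfl h2, Finset.sum_add_distrib, ih]
    conv_lhs => rw [Finset.sum_insert Finset.right_notMem_Ico]
    rw [max_self, h1, Finset.sum_const, Nat.card_Ico, nsmul_eq_mul, Nat.cast_sub hn, Nat.cast_one]
    conv_rhs => rw [Finset.sum_insert Finset.right_notMem_Ico]
    ring

lemma count_floor (a b : ℕ) (ha : 0 < a) (hb : 0 < b) (hab : Nat.Coprime a b) :
    ∑ k ∈ Finset.Ico 1 b, ((a*(k:ℤ))/b)^2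
      = ∑ m ∈ Finset.Ico 1 a, (2*(m:ℤ)-1)*((b:ℤ)-1 - ((b:ℤ)*m)/a) := by
  have haz : (0:ℤ) < a := by exact_mod_cast ha
  have hbz : (0:ℤ) < b := by exact_mod_cast hb
  -- no lattice point on the open segment
  have hnl : ∀ k l : ℕ, 1 ≤ k → k < b → (b:ℤ)*l ≠ a*k := by
    intro k l hk1 hkb h
    have : b ∣ a * k := ⟨l, by exact_mod_cast h.symm⟩
    have : b ∣ k := (Nat.Coprime.dvd_of_dvd_mul_left (Nat.Coprime.symm hab) this)
    have := Nat.le_of_dvd (by omega) this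
    omega
  -- step 1 : the floor as a count
  have hfl : ∀ k ∈ Finset.Ico 1 b, ((a*(k:ℤ))/b)
      = ∑ l ∈ Finset.Ico 1 a, (if (b:ℤ)*l < a*k then (1:ℤ) else 0) := by
    intro k hk
    simp only [Finset.mem_Ico] at hk
    rw [Finset.sum_boole]
    have hscard : Finset.filter (fun l : ℕ => (b:ℤ)*l < a*k) (Finset.Ico 1 a)
        = Finset.Ico 1 ((a*(k:ℤ))/b).toNat.succ := by
      ext l
      simp only [Finset.mem_filter, Finset.mem_Ico, Nat.lt_succ_iff]
      constructor
      · rintro ⟨⟨h1, h2⟩, h3⟩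
        refine ⟨h1, ?_⟩
        have : (l:ℤ) ≤ (a*(k:ℤ))/b := by
          rw [Int.le_ediv_iff_mul_le hbz]
          nlinarith
        omega
      · rintro ⟨h1, h2⟩
        have hle : (l:ℤ) ≤ (a*(k:ℤ))/b := by
          have h0 : (0:ℤ) ≤ (a*(k:ℤ))/b := Int.ediv_nonneg (by positivity) (le_of_lt hbz)
          omega
        have hbl : (b:ℤ)*l ≤ a*k := by
          have := (Int.le_ediv_iff_mul_le hbz).mp hle
          nlinarith
        have hne := hnl k l hk.1 hk.2
        have hlt : (b:ℤ)*l < a*k := lt_of_le_of_ne hbl hne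
        refine ⟨⟨h1, ?_⟩, hlt⟩
        -- l < a
        have : (a*(k:ℤ))/b < a := by
          rw [Int.ediv_lt_iff_lt_mul hbz]
          have : (k:ℤ) < b := by exact_mod_cast hk.2
          nlinarith
        omega
    rw [hscard, Nat.card_Ico]
    have h0 : (0:ℤ) ≤ (a*(k:ℤ))/b := Int.ediv_nonneg (by positivity) (le_of_lt hbz)
    omega
  -- step 3 : inner count
  have hcount : ∀ m : ℕ, 1 ≤ m → m < a →
      (∑ k ∈ Finset.Ico 1 b, if (b:ℤ)*m < a*(k:ℤ) then (1:ℤ) else 0)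
        = (b:ℤ)-1 - ((b:ℤ)*m)/a := by
    intro m hm1 hm2
    rw [Finset.sum_boole]
    have hscard : Finset.filter (fun k : ℕ => (b:ℤ)*m < a*(k:ℤ)) (Finset.Ico 1 b)
        = Finset.Ico (((b:ℤ)*m/a).toNat + 1) b := by
      ext k
      simp only [Finset.mem_filter, Finset.mem_Ico]
      have h0 : (0:ℤ) ≤ ((b:ℤ)*m)/a := Int.ediv_nonneg (by positivity) (le_of_lt haz)
      constructor
      · rintro ⟨⟨h1, h2⟩, h3⟩
        refine ⟨?_, h2⟩
        have : ((b:ℤ)*m)/a < k := by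
          rw [Int.ediv_lt_iff_lt_mul haz]
          nlinarith
        omega
      · rintro ⟨h1, h2⟩
        have : ((b:ℤ)*m)/a < (k:ℤ) := by omega
        have hlt : (b:ℤ)*m < k*a := (Int.ediv_lt_iff_lt_mul haz).mp this
        exact ⟨⟨by omega, h2⟩, by nlinarith⟩
    rw [hscard, Nat.card_Ico]
    have hub : ((b:ℤ)*m)/a < b := by
      rw [Int.ediv_lt_iff_lt_mul haz]
      have : (m:ℤ) < a := by exact_mod_cast hm2
      nlinarith
    have h0 : (0:ℤ) ≤ ((b:ℤ)*m)/a := Int.ediv_nonneg (by positivity) (le_of_lt haz)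
    omega
  -- assemble
  calc ∑ k ∈ Finset.Ico 1 b, ((a*(k:ℤ))/b)^2
      = ∑ k ∈ Finset.Ico 1 b, ∑ l ∈ Finset.Ico 1 a, ∑ l' ∈ Finset.Ico 1 a,
          (if (b:ℤ)*l < a*k ∧ (b:ℤ)*l' < a*k then (1:ℤ) else 0) := by
        apply Finset.sum_congr rfl
        intro k hk
        rw [sq, hfl k hk, Finset.sum_mul_sum]
        apply Finset.sum_congr rfl; intro l _
        apply Finset.sum_congr rfl; intro l' _
        split_ifs <;> tauto
    _ = ∑ l ∈ Finset.Ico 1 a, ∑ l' ∈ Finset.Ico 1 a, ∑ k ∈ Finset.Ico 1 b,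
          (if (b:ℤ)*(max l l') < a*k then (1:ℤ) else 0) := by
        rw [Finset.sum_comm]
        apply Finset.sum_congr rfl; intro l _
        rw [Finset.sum_comm]
        apply Finset.sum_congr rfl; intro l' _
        apply Finset.sum_congr rfl; intro k _
        congr 1
        simp only [eq_iff_iff]
        constructor
        · rintro ⟨h1, h2⟩
          rcases max_cases l l' with ⟨hm, _⟩ | ⟨hm, _⟩ <;> rw [hm] <;> assumption
        · intro h
          have hl : (l:ℤ) ≤ (max l l' : ℕ) := by exact_mod_cast le_max_left l l'
          have hl' : (l':ℤ) ≤ (max l l' : ℕ) := by exact_mod_cast le_max_right l l'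
          constructor <;> nlinarith
    _ = ∑ l ∈ Finset.Ico 1 a, ∑ l' ∈ Finset.Ico 1 a, ((b:ℤ)-1 - ((b:ℤ)*(max l l'))/a) := by
        apply Finset.sum_congr rfl; intro l hl
        apply Finset.sum_congr rfl; intro l' hl'
        simp only [Finset.mem_Ico] at hl hl'
        exact hcount (max l l') (by omega) (by omega)
    _ = ∑ m ∈ Finset.Ico 1 a, (2*(m:ℤ)-1)*((b:ℤ)-1 - ((b:ℤ)*m)/a) :=
        sum_pairs_max a (fun m => (b:ℤ)-1 - ((b:ℤ)*m)/a)



def Psum (a : ℤ) (b : ℕ) : ℤ := ∑ k ∈ Finset.Ico 1 b, (k:ℤ) * ((a*k) % (b:ℤ))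
def Fsum (a : ℤ) (b : ℕ) : ℤ := ∑ k ∈ Finset.Ico 1 b, ((a*(k:ℤ))/(b:ℤ))^2
def Isum (b : ℕ) : ℤ := ∑ k ∈ Finset.Ico 1 b, (k:ℤ)
def Qsum (b : ℕ) : ℤ := ∑ k ∈ Finset.Ico 1 b, (k:ℤ)^2

lemma mod_ne_zero (a : ℤ) (b : ℕ) (hab : IsCoprime a (b:ℤ)) (k : ℕ)
    (hk : k ∈ Finset.Ico 1 b) : (a * k) % (b:ℤ) ≠ 0 := by
  simp only [Finset.mem_Ico] at hk
  intro hzero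
  have hdvd : (b:ℤ) ∣ a * k := Int.dvd_of_emod_eq_zero hzero
  have : (b:ℤ) ∣ (k:ℤ) := (hab.symm).dvd_of_dvd_mul_left hdvd
  have : b ∣ k := by exact_mod_cast this
  have := Nat.le_of_dvd (by omega) this
  omega

lemma ds_eq (a : ℤ) (b : ℕ) (hb : 0 < b) (hab : IsCoprime a (b:ℤ)) :
    dedekindSum a b = ((Psum a b : ℤ) : ℝ)/(b:ℝ)^2 - ((b:ℝ)-1)/4 := by
  have hbz : (0:ℝ) < (b:ℝ) := by exact_mod_cast hb
  have hbzz : ((b:ℕ):ℤ) ≠ 0 := by exact_mod_cast hb.ne'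
  have step : ∀ k ∈ Finset.Ico 1 b, saw ((k:ℝ)/b) * saw ((a:ℝ)*k/b)
      = (↑((k:ℤ) * ((a*k) % (b:ℤ))) : ℝ)/(b:ℝ)^2 - (k:ℝ)/(2*(b:ℝ))
        - (↑((a*k) % (b:ℤ)) : ℝ)/(2*(b:ℝ)) + 1/4 := by
    intro k hk
    have hm0 : 0 ≤ (a*k) % (b:ℤ) := Int.emod_nonneg _ hbzz
    have hmne : (a * k) % (b:ℤ) ≠ 0 := mod_ne_zero a b hab k hk
    simp only [Finset.mem_Ico] at hk
    have hk0 : (0:ℝ) < (k:ℝ) := by exact_mod_cast hk.1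
    have e1 : saw ((k:ℝ)/b) = (k:ℝ)/b - 1/2 := by
      have hf : Int.fract ((k:ℝ)/b) = (k:ℝ)/b := by
        rw [Int.fract_eq_self]
        refine ⟨by positivity, ?_⟩
        rw [div_lt_one hbz]; exact_mod_cast hk.2
      rw [saw_nonint _ (by rw [hf]; exact ne_of_gt (div_pos hk0 hbz)), hf]
    have hpos : (0:ℝ) < (↑((a*k) % (b:ℤ)) : ℝ) := by
      have : 0 < (a*k) % (b:ℤ) := lt_of_le_of_ne hm0 (Ne.symm hmne)
      exact_mod_cast this
    have e2 : saw ((a:ℝ)*k/b) = (↑((a*k) % (b:ℤ)) : ℝ)/b - 1/2 := by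
      have hc : (a:ℝ)*k/b = ((↑(a*(k:ℤ))):ℝ)/((b:ℕ):ℝ) := by push_cast; ring
      have hf : Int.fract (((↑(a*(k:ℤ))):ℝ)/((b:ℕ):ℝ)) = (↑((a*(k:ℤ)) % (b:ℤ)) : ℝ)/(b:ℝ) :=
        Int.fract_div_intCast_eq_div_intCast_mod
      rw [hc, saw_nonint _ (by rw [hf]; exact ne_of_gt (div_pos hpos hbz)), hf]
    rw [e1, e2]
    push_cast
    field_simp
    ring
  have hlast : saw ((b:ℝ)/b) * saw ((a:ℝ)*b/b) = 0 := by
    have : (b:ℝ)/b = ((1:ℤ):ℝ) := by rw [div_self hbz.ne']; norm_num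
    rw [this, saw_intCast]; ring
  rw [dedekindSum, ← Finset.Ico_add_one_right_eq_Icc, Finset.sum_Ico_succ_top hb, hlast, add_zero,
    Finset.sum_congr rfl step]
  rw [Finset.sum_add_distrib, Finset.sum_sub_distrib, Finset.sum_sub_distrib]
  have hIb : (∑ k ∈ Finset.Ico 1 b, (k:ℝ)) * 2 = (b:ℝ) * ((b:ℝ)-1) := by
    have h := congrArg (fun z : ℤ => (z:ℝ)) (sum_Ico_id_mul_two b)
    push_cast at h
    linarith [h]
  have c1 : ∑ k ∈ Finset.Ico 1 b, (↑((k:ℤ) * ((a*k) % (b:ℤ))) : ℝ)/(b:ℝ)^2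
      = ((Psum a b : ℤ) : ℝ)/(b:ℝ)^2 := by
    rw [← Finset.sum_div]
    simp only [Psum]
    push_cast
    rfl
  have c2 : ∑ k ∈ Finset.Ico 1 b, (k:ℝ)/(2*(b:ℝ)) = ((b:ℝ)-1)/4 := by
    rw [← Finset.sum_div]
    field_simp
    linarith [hIb]
  have c3 : ∑ k ∈ Finset.Ico 1 b, (↑((a*k) % (b:ℤ)) : ℝ)/(2*(b:ℝ)) = ((b:ℝ)-1)/4 := by
    rw [← Finset.sum_div]
    have hMb : ∑ k ∈ Finset.Ico 1 b, (↑((a*k) % (b:ℤ)) : ℝ) = ∑ k ∈ Finset.Ico 1 b, (k:ℝ) := by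
      have h0 := sum_mod_perm a b hb hab id
      simp only [id] at h0
      have h := congrArg (fun z : ℤ => (z:ℝ)) h0
      push_cast at h
      exact h
    rw [hMb]
    field_simp
    linarith [hIb]
  have c4 : ∑ _k ∈ Finset.Ico 1 b, (1:ℝ)/4 = ((b:ℝ)-1)/4 := by
    rw [Finset.sum_const, Nat.card_Ico, nsmul_eq_mul]
    have h1 : 1 ≤ b := hb
    have : ((b - 1 : ℕ):ℝ) = (b:ℝ) - 1 := by push_cast [Nat.cast_sub h1]; ring
    rw [this]; ring
  rw [c1, c2, c3, c4]
  ring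

theorem recip (a b : ℕ) (ha : 0 < a) (hb : 0 < b) (hab : Nat.Coprime a b) :
    12 * dedekindSum a b + 12 * dedekindSum b a
      = -3 + ((a:ℝ)^2 + (b:ℝ)^2 + 1)/((a:ℝ)*(b:ℝ)) := by
  have haz : (0:ℝ) < (a:ℝ) := by exact_mod_cast ha
  have hbz : (0:ℝ) < (b:ℝ) := by exact_mod_cast hb
  have hcop1 : IsCoprime ((a:ℕ):ℤ) ((b:ℕ):ℤ) := by
    rw [Int.isCoprime_iff_gcd_eq_one, Int.gcd_natCast_natCast]
    exact hab
  have hcop2 : IsCoprime ((b:ℕ):ℤ) ((a:ℕ):ℤ) := hcop1.symm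
  have hGa : Isum a * 2 = (a:ℤ) * ((a:ℤ)-1) := sum_Ico_id_mul_two a
  have hQa : Qsum a * 6 = (a:ℤ) * ((a:ℤ)-1) * (2*(a:ℤ)-1) := sum_Ico_sq_mul_six a
  have hQb : Qsum b * 6 = (b:ℤ) * ((b:ℤ)-1) * (2*(b:ℤ)-1) := sum_Ico_sq_mul_six b
  have hmodsq : ∑ k ∈ Finset.Ico 1 b, (((a:ℤ)*k) % (b:ℤ))^2 = Qsum b := by
    have := sum_mod_perm (a:ℤ) b hb hcop1 (fun x => x^2)
    simpa [Qsum] using this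
  have h3 : (b:ℤ)^2 * Fsum (a:ℤ) b = (a:ℤ)^2*Qsum b - 2*(a:ℤ)*Psum (a:ℤ) b + Qsum b := by
    have e : ∀ k ∈ Finset.Ico 1 b, (b:ℤ)^2 * (((a:ℤ)*(k:ℤ))/(b:ℤ))^2
        = ((a:ℤ)*(k:ℤ))^2 - 2*((a:ℤ)*(k:ℤ))*(((a:ℤ)*k) % (b:ℤ)) + (((a:ℤ)*k) % (b:ℤ))^2 := by
      intro k _
      have h := Int.mul_ediv_add_emod ((a:ℤ)*(k:ℤ)) (b:ℤ)
      linear_combination ((b:ℤ)*((a:ℤ)*(k:ℤ)/(b:ℤ)) + (a:ℤ)*(k:ℤ) - ((a:ℤ)*k) % (b:ℤ)) * h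
    simp only [Fsum]
    rw [Finset.mul_sum, Finset.sum_congr rfl e,
      Finset.sum_add_distrib, Finset.sum_sub_distrib, hmodsq]
    have e2 : ∑ k ∈ Finset.Ico 1 b, ((a:ℤ)*(k:ℤ))^2 = (a:ℤ)^2 * Qsum b := by
      simp only [Qsum]
      rw [Finset.mul_sum]
      exact Finset.sum_congr rfl (fun k _ => by ring)
    have e3 : ∑ k ∈ Finset.Ico 1 b, 2*((a:ℤ)*(k:ℤ))*(((a:ℤ)*k) % (b:ℤ))
        = 2*(a:ℤ)*Psum (a:ℤ) b := by
      simp only [Psum]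
      rw [Finset.mul_sum]
      exact Finset.sum_congr rfl (fun k _ => by ring)
    rw [e2, e3]
  have hmoda : ∑ m ∈ Finset.Ico 1 a, (((b:ℤ)*m) % (a:ℤ)) = Isum a := by
    have := sum_mod_perm (b:ℤ) a ha hcop2 id
    simpa [Isum] using this
  have h4 : (a:ℤ) * Fsum (a:ℤ) b
      = (a:ℤ)*((b:ℤ)-1)*(2*Isum a-((a:ℤ)-1)) - (b:ℤ)*(2*Qsum a-Isum a)
        + (2*Psum (b:ℤ) a-Isum a) := by
    have hcf := count_floor a b ha hb hab
    have e : ∀ m ∈ Finset.Ico 1 a, (a:ℤ) * ((2*(m:ℤ)-1)*((b:ℤ)-1 - ((b:ℤ)*m)/(a:ℤ)))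
        = (2*((a:ℤ)*((b:ℤ)-1))+(b:ℤ))*(m:ℤ) - 2*(b:ℤ)*(m:ℤ)^2
          + 2*((m:ℤ)*(((b:ℤ)*m) % (a:ℤ))) - (((b:ℤ)*m) % (a:ℤ)) - (a:ℤ)*((b:ℤ)-1) := by
      intro m _
      have h := Int.mul_ediv_add_emod ((b:ℤ)*(m:ℤ)) (a:ℤ)
      linear_combination (-(2*(m:ℤ)-1)) * h
    simp only [Fsum]
    rw [hcf, Finset.mul_sum, Finset.sum_congr rfl e]
    rw [Finset.sum_sub_distrib, Finset.sum_sub_distrib, Finset.sum_add_distrib,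
      Finset.sum_sub_distrib]
    rw [← Finset.mul_sum, ← Finset.mul_sum, ← Finset.mul_sum]
    rw [hmoda, Finset.sum_const, Nat.card_Ico, nsmul_eq_mul]
    have h1 : 1 ≤ a := ha
    have hc : ((a - 1 : ℕ):ℤ) = (a:ℤ) - 1 := by push_cast [Nat.cast_sub h1]; ring
    rw [hc]
    rw [show (∑ m ∈ Finset.Ico 1 a, (m:ℤ)) = Isum a from rfl,
      show (∑ m ∈ Finset.Ico 1 a, (m:ℤ)^2) = Qsum a from rfl,
      show (∑ m ∈ Finset.Ico 1 a, (m:ℤ)*(((b:ℤ)*m) % (a:ℤ))) = Psum (b:ℤ) a from rfl]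
    ring
  have key : 12*(a:ℤ)^2*Psum (a:ℤ) b + 12*(b:ℤ)^2*Psum (b:ℤ) a
      = 3*(a:ℤ)^2*(b:ℤ)^2*((a:ℤ)+(b:ℤ)-3) + (a:ℤ)*(b:ℤ)*((a:ℤ)^2+(b:ℤ)^2+1) := by
    linear_combination (6*(a:ℤ))*h3 + (-6*(b:ℤ)^2)*h4
      + (-3*(b:ℤ)^2*(2*(a:ℤ)*((b:ℤ)-1)+(b:ℤ)-1))*hGa + (2*(b:ℤ)^3)*hQa
      + ((a:ℤ)*((a:ℤ)^2+1))*hQb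
  rw [ds_eq (a:ℤ) b hb hcop1, ds_eq (b:ℤ) a ha hcop2]
  have keyR : 12*(a:ℝ)^2*((Psum (a:ℤ) b : ℤ):ℝ) + 12*(b:ℝ)^2*((Psum (b:ℤ) a : ℤ):ℝ)
      = 3*(a:ℝ)^2*(b:ℝ)^2*((a:ℝ)+(b:ℝ)-3) + (a:ℝ)*(b:ℝ)*((a:ℝ)^2+(b:ℝ)^2+1) := by
    exact_mod_cast congrArg (Int.cast : ℤ → ℝ) key
  have ha2 : ((a:ℝ)^2*(b:ℝ)^2) ≠ 0 := by positivity
  apply mul_left_cancel₀ ha2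
  have L : ((a:ℝ)^2*(b:ℝ)^2) * (12 * (((Psum (a:ℤ) b : ℤ):ℝ)/(b:ℝ)^2 - ((b:ℝ)-1)/4)
        + 12 * (((Psum (b:ℤ) a : ℤ):ℝ)/(a:ℝ)^2 - ((a:ℝ)-1)/4))
      = 12*(a:ℝ)^2*((Psum (a:ℤ) b : ℤ):ℝ) + 12*(b:ℝ)^2*((Psum (b:ℤ) a : ℤ):ℝ)
        - 3*(a:ℝ)^2*(b:ℝ)^2*(((a:ℝ)-1)+((b:ℝ)-1)) := by
    field_simp
    ring
  have R : ((a:ℝ)^2*(b:ℝ)^2) * (-3 + ((a:ℝ)^2+(b:ℝ)^2+1)/((a:ℝ)*(b:ℝ)))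
      = -3*(a:ℝ)^2*(b:ℝ)^2 + (a:ℝ)*(b:ℝ)*((a:ℝ)^2+(b:ℝ)^2+1) := by
    field_simp
  rw [L, R]
  linear_combination keyR

set_option maxHeartbeats 2000000 in
lemma sign_lemma (u c d cA dA : ℤ) (hrel : d*cA - c*dA = u) (h1 : c ≠ 0 ∨ d ≠ 0)
    (h2 : cA ≠ 0 ∨ dA ≠ 0) :
    (cA*dA).sign + (u*c*cA).sign = (u*d*dA).sign + (c*d).sign := by
  rcases lt_trichotomy u 0 with hu|hu|hu <;>
  rcases lt_trichotomy c 0 with hc|hc|hc <;>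
  rcases lt_trichotomy d 0 with hd|hd|hd <;>
  rcases lt_trichotomy cA 0 with hA|hA|hA <;>
  rcases lt_trichotomy dA 0 with hB|hB|hB <;>
  simp_all [Int.sign_mul, Int.sign_eq_one_of_pos, Int.sign_eq_neg_one_of_neg] <;>
  nlinarith [hrel]



lemma S_recip (a b : ℕ) (ha : 0 < a) (hb : 0 < b) (hab : Nat.Coprime a b) :
    S (a:ℤ) b + S (b:ℤ) a = -3 + ((a:ℝ)^2 + (b:ℝ)^2 + 1)/((a:ℝ)*(b:ℝ)) := by
  unfold S
  have := recip a b ha hb hab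
  linarith [this]

lemma S_period (d c : ℤ) (n : ℤ) : S (c*n + d) c.natAbs = S d c.natAbs := by
  have h : c*n + d = d + (c.sign*n) * (c.natAbs:ℤ) := by
    have h2 := Int.sign_mul_natAbs c
    linear_combination (-n) * h2
  rw [h, S_add_int_mul]

lemma S_sign_decomp (c : ℤ) (m : ℕ) : S c m = (c.sign:ℝ) * S (c.natAbs:ℤ) m := by
  rcases lt_trichotomy c 0 with hc|hc|hc
  · rw [Int.sign_eq_neg_one_of_neg hc]
    have h : (c.natAbs:ℤ) = -c := by omega
    rw [h, S_neg]; push_cast; ring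
  · subst hc; simp [S_zero_left]
  · rw [Int.sign_eq_one_of_pos hc]
    have h : (c.natAbs:ℤ) = c := by omega
    rw [h]; push_cast; ring


noncomputable def Phi (a b c d : ℤ) : ℝ :=
  if c = 0 then ((b*d : ℤ) : ℝ) else ((a:ℝ)+(d:ℝ))/(c:ℝ) - (c.sign:ℝ) * S d c.natAbs

lemma Phi_neg (a b c d : ℤ) : Phi (-a) (-b) (-c) (-d) = Phi a b c d := by
  unfold Phi
  rcases eq_or_ne c 0 with rfl|hc
  · norm_num
  · rw [if_neg (by omega), if_neg hc]
    have h1 : ((-c).sign:ℝ) = -(c.sign:ℝ) := by rw [Int.sign_neg]; push_cast; ring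
    have h2 : (-c).natAbs = c.natAbs := Int.natAbs_neg c
    rw [h1, h2, S_neg]
    push_cast
    rw [show (-(a:ℝ) + -(d:ℝ)) = -((a:ℝ)+(d:ℝ)) by ring, neg_div_neg_eq]
    ring

lemma Phi_T (a b c d n : ℤ) (h : a*d - b*c = 1) :
    Phi a (a*n+b) c (c*n+d) = Phi a b c d + n := by
  unfold Phi
  rcases eq_or_ne c 0 with rfl|hc
  · norm_num
    have h2 : (a:ℝ) * (d:ℝ) = 1 := by exact_mod_cast (by linarith [h] : a*d = (1:ℤ))
    push_cast
    linear_combination (n:ℝ) * h2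
  · rw [if_neg hc, if_neg hc, S_period d c n]
    have hcr : (c:ℝ) ≠ 0 := Int.cast_ne_zero.mpr hc
    push_cast
    field_simp
    ring

lemma Phi_S (a b c d : ℤ) (h : a*d - b*c = 1) :
    Phi b (-a) d (-c) = Phi a b c d - 3 * ((c*d).sign : ℝ) := by
  rcases eq_or_ne d 0 with rfl|hd
  · have hbc : (-b) * c = 1 := by linarith
    rcases Int.mul_eq_one_iff_eq_one_or_neg_one.mp hbc with ⟨hb1, hc1⟩ | ⟨hb1, hc1⟩ <;>
      subst hc1 <;>
      unfold Phi <;>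
      norm_num [S_zero_left] <;>
      push_cast <;>
      ring_nf <;>
      omega
  · rcases eq_or_ne c 0 with rfl|hc
    · have had : a * d = 1 := by linarith
      rcases Int.mul_eq_one_iff_eq_one_or_neg_one.mp had with ⟨ha1, hd1⟩ | ⟨ha1, hd1⟩ <;>
        subst hd1 <;>
        unfold Phi <;>
        norm_num [S_zero_left, div_neg, div_one]
    · -- main case : reciprocity
      have hdet : (a:ℝ)*(d:ℝ) - (b:ℝ)*(c:ℝ) = 1 := by exact_mod_cast h
      have hcop : IsCoprime c d := ⟨-b, a, by linarith⟩
      have hncop : Nat.Coprime c.natAbs d.natAbs := Int.isCoprime_iff_gcd_eq_one.mp hcop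
      have hcpos : 0 < c.natAbs := Int.natAbs_pos.mpr hc
      have hdpos : 0 < d.natAbs := Int.natAbs_pos.mpr hd
      have hrec := S_recip c.natAbs d.natAbs hcpos hdpos hncop
      have hcr : (c:ℝ) ≠ 0 := Int.cast_ne_zero.mpr hc
      have hdr : (d:ℝ) ≠ 0 := Int.cast_ne_zero.mpr hd
      unfold Phi
      rw [if_neg hd, if_neg hc, Int.sign_mul]
      rw [show (-c) = -c from rfl, S_neg c d.natAbs, S_sign_decomp c d.natAbs,
        S_sign_decomp d c.natAbs]
      rcases lt_trichotomy c 0 with hcs|hcs|hcs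
      · rcases lt_trichotomy d 0 with hds|hds|hds
        · rw [Int.sign_eq_neg_one_of_neg hcs, Int.sign_eq_neg_one_of_neg hds]
          rw [show ((c.natAbs:ℕ):ℝ) = -(c:ℝ) by rw [Nat.cast_natAbs]; exact_mod_cast abs_of_neg hcs,
            show ((d.natAbs:ℕ):ℝ) = -(d:ℝ) by rw [Nat.cast_natAbs]; exact_mod_cast abs_of_neg hds] at hrec
          push_cast at hrec ⊢
          have hrec2 : (S |c| d.natAbs + S |d| c.natAbs) * ((c:ℝ)*(d:ℝ))
              = -3*((c:ℝ)*(d:ℝ)) + ((c:ℝ)^2+(d:ℝ)^2+1) := by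
            rw [hrec]; field_simp; try ring
          field_simp
          linear_combination hrec2 - hdet
        · omega
        · rw [Int.sign_eq_neg_one_of_neg hcs, Int.sign_eq_one_of_pos hds]
          rw [show ((c.natAbs:ℕ):ℝ) = -(c:ℝ) by rw [Nat.cast_natAbs]; exact_mod_cast abs_of_neg hcs,
            show ((d.natAbs:ℕ):ℝ) = (d:ℝ) by rw [Nat.cast_natAbs]; exact_mod_cast abs_of_pos hds] at hrec
          push_cast at hrec ⊢
          have hrec2 : (S |c| d.natAbs + S |d| c.natAbs) * ((c:ℝ)*(d:ℝ))
              = -3*((c:ℝ)*(d:ℝ)) - ((c:ℝ)^2+(d:ℝ)^2+1) := by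
            rw [hrec]; field_simp; try ring
          field_simp
          linear_combination -hrec2 - hdet
      · omega
      · rcases lt_trichotomy d 0 with hds|hds|hds
        · rw [Int.sign_eq_one_of_pos hcs, Int.sign_eq_neg_one_of_neg hds]
          rw [show ((c.natAbs:ℕ):ℝ) = (c:ℝ) by rw [Nat.cast_natAbs]; exact_mod_cast abs_of_pos hcs,
            show ((d.natAbs:ℕ):ℝ) = -(d:ℝ) by rw [Nat.cast_natAbs]; exact_mod_cast abs_of_neg hds] at hrec
          push_cast at hrec ⊢
          have hrec2 : (S |c| d.natAbs + S |d| c.natAbs) * ((c:ℝ)*(d:ℝ))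
              = -3*((c:ℝ)*(d:ℝ)) - ((c:ℝ)^2+(d:ℝ)^2+1) := by
            rw [hrec]; field_simp; try ring
          field_simp
          linear_combination -hrec2 - hdet
        · omega
        · rw [Int.sign_eq_one_of_pos hcs, Int.sign_eq_one_of_pos hds]
          rw [show ((c.natAbs:ℕ):ℝ) = (c:ℝ) by rw [Nat.cast_natAbs]; exact_mod_cast abs_of_pos hcs,
            show ((d.natAbs:ℕ):ℝ) = (d:ℝ) by rw [Nat.cast_natAbs]; exact_mod_cast abs_of_pos hds] at hrec
          push_cast at hrec ⊢
          have hrec2 : (S |c| d.natAbs + S |d| c.natAbs) * ((c:ℝ)*(d:ℝ))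
              = -3*((c:ℝ)*(d:ℝ)) + ((c:ℝ)^2+(d:ℝ)^2+1) := by
            rw [hrec]; field_simp; try ring
          field_simp
          linear_combination hrec2 - hdet



lemma cocycle_czero (a1 b1 c1 d1 a2 b2 d2 : ℤ) (h1 : a1*d1 - b1*c1 = 1)
    (h2 : a2*d2 - b2*0 = 1) :
    Phi (a1*a2 + b1*0) (a1*b2 + b1*d2) (c1*a2 + d1*0) (c1*b2 + d1*d2)
      = Phi a1 b1 c1 d1 + Phi a2 b2 0 d2 - 3*((c1*0*(c1*a2 + d1*0)).sign:ℝ) := by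
  have had : a2*d2 = 1 := by linarith
  have hs : ((c1*0*(c1*a2 + d1*0)).sign:ℝ) = 0 := by norm_num
  rw [hs]
  rcases Int.mul_eq_one_iff_eq_one_or_neg_one.mp had with ⟨ha2, hd2⟩|⟨ha2,hd2⟩ <;>
    subst ha2 <;> subst hd2
  · have e1 : a1*1 + b1*0 = a1 := by ring
    have e2 : a1*b2 + b1*1 = a1*b2 + b1 := by ring
    have e3 : c1*1 + d1*0 = c1 := by ring
    have e4 : c1*b2 + d1*1 = c1*b2 + d1 := by ring
    rw [e1, e2, e3, e4, Phi_T a1 b1 c1 d1 b2 h1]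
    have hp : Phi 1 b2 0 1 = (b2:ℝ) := by unfold Phi; norm_num
    rw [hp]; ring
  · have e1 : a1*(-1) + b1*0 = -a1 := by ring
    have e2 : a1*b2 + b1*(-1) = -(a1*(-b2) + b1) := by ring
    have e3 : c1*(-1) + d1*0 = -c1 := by ring
    have e4 : c1*b2 + d1*(-1) = -(c1*(-b2) + d1) := by ring
    rw [e1, e2, e3, e4, Phi_neg a1 (a1*(-b2)+b1) c1 (c1*(-b2)+d1),
      Phi_T a1 b1 c1 d1 (-b2) h1]
    have hp : Phi (-1) b2 0 (-1) = -(b2:ℝ) := by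
      unfold Phi; norm_num
    rw [hp]; push_cast; ring

theorem cocycle_aux : ∀ (N : ℕ) (a1 b1 c1 d1 a2 b2 c2 d2 : ℤ), c2.natAbs ≤ N →
    a1*d1 - b1*c1 = 1 → a2*d2 - b2*c2 = 1 →
    Phi (a1*a2 + b1*c2) (a1*b2 + b1*d2) (c1*a2 + d1*c2) (c1*b2 + d1*d2)
      = Phi a1 b1 c1 d1 + Phi a2 b2 c2 d2 - 3 * ((c1*c2*(c1*a2 + d1*c2)).sign : ℝ) := by
  intro N
  induction N with
  | zero =>
    intro a1 b1 c1 d1 a2 b2 c2 d2 hle h1 h2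
    have hc2 : c2 = 0 := by omega
    subst hc2
    exact cocycle_czero a1 b1 c1 d1 a2 b2 d2 h1 h2
  | succ N ih =>
    intro a1 b1 c1 d1 a2 b2 c2 d2 hle h1 h2
    rcases eq_or_ne c2 0 with rfl|hc2
    · exact cocycle_czero a1 b1 c1 d1 a2 b2 d2 h1 h2
    · set n := d2 / c2 with hn
      have hdm := Int.mul_ediv_add_emod d2 c2
      have hr0 : 0 ≤ d2 % c2 := Int.emod_nonneg d2 hc2
      have hrlt : d2 % c2 < |c2| := by
        rcases lt_or_gt_of_ne hc2 with hneg|hpos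
        · have h' : d2 % c2 = d2 % (-c2) := by rw [Int.emod_neg]
          rw [h', abs_of_neg hneg]
          exact Int.emod_lt_of_pos d2 (by omega)
        · rw [abs_of_pos hpos]
          exact Int.emod_lt_of_pos d2 hpos
      have hdetδ : (n*a2 - b2)*c2 - a2*(n*c2 - d2) = 1 := by linear_combination h2
      have hnatabs : (n*c2 - d2).natAbs ≤ N := by
        have h1' : n*c2 - d2 = -(d2 % c2) := by linear_combination hdm
        have h2' : |c2| = (c2.natAbs:ℤ) := Int.abs_eq_natAbs c2
        have h3' : (c2.natAbs:ℤ) ≤ (N:ℤ) + 1 := by exact_mod_cast hle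
        have h4' : ((n*c2 - d2).natAbs : ℤ) = d2 % c2 := by
          rw [h1', Int.natAbs_neg]
          exact_mod_cast Int.natAbs_of_nonneg hr0
        omega
      -- determinant of A = γ1 δ
      have hdetA : (a1*(n*a2-b2) + b1*(n*c2-d2))*(c1*a2 + d1*c2)
          - (a1*a2 + b1*c2)*(c1*(n*a2-b2) + d1*(n*c2-d2)) = 1 := by
        linear_combination ((n*a2 - b2)*c2 - a2*(n*c2 - d2)) * h1 + hdetδ
      have hdetAS : (a1*a2 + b1*c2)*(-(c1*(n*a2-b2) + d1*(n*c2-d2)))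
          - (-(a1*(n*a2-b2) + b1*(n*c2-d2)))*(c1*a2 + d1*c2) = 1 := by
        linear_combination hdetA
      have hdetδS : a2*(-(n*c2-d2)) - (-(n*a2-b2))*c2 = 1 := by linear_combination hdetδ
      -- step 1 : rewrite LHS
      have eb : a1*b2 + b1*d2
          = (a1*a2 + b1*c2)*n + -(a1*(n*a2-b2) + b1*(n*c2-d2)) := by ring
      have ed : c1*b2 + d1*d2
          = (c1*a2 + d1*c2)*n + -(c1*(n*a2-b2) + d1*(n*c2-d2)) := by ring
      rw [eb, ed,
        Phi_T (a1*a2 + b1*c2) (-(a1*(n*a2-b2) + b1*(n*c2-d2))) (c1*a2 + d1*c2)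
          (-(c1*(n*a2-b2) + d1*(n*c2-d2))) n hdetAS,
        Phi_S (a1*(n*a2-b2) + b1*(n*c2-d2)) (a1*a2 + b1*c2)
          (c1*(n*a2-b2) + d1*(n*c2-d2)) (c1*a2 + d1*c2) hdetA]
      -- step 2 : decompose Phi a2 b2 c2 d2
      have e2b : b2 = a2*n + -(n*a2 - b2) := by ring
      have e2d : d2 = c2*n + -(n*c2 - d2) := by ring
      have step2 : Phi a2 b2 c2 d2
          = Phi (n*a2-b2) a2 (n*c2-d2) c2 - 3*((((n*c2-d2))*c2).sign:ℝ) + n := by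
        conv_lhs => rw [e2b, e2d]
        rw [Phi_T a2 (-(n*a2-b2)) c2 (-(n*c2-d2)) n hdetδS,
          Phi_S (n*a2-b2) a2 (n*c2-d2) c2 hdetδ]
      rw [step2]
      -- induction hypothesis
      rw [ih a1 b1 c1 d1 (n*a2-b2) a2 (n*c2-d2) c2 hnatabs h1 hdetδ]
      -- sign identity
      have hrel : c2*(c1*(n*a2-b2) + d1*(n*c2-d2)) - (n*c2-d2)*(c1*a2 + d1*c2) = c1 := by
        linear_combination c1 * hdetδ
      have hAnz : (c1*(n*a2-b2) + d1*(n*c2-d2)) ≠ 0 ∨ (c1*a2 + d1*c2) ≠ 0 := by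
        by_contra hcon
        push_neg at hcon
        obtain ⟨hx, hy⟩ := hcon
        rw [hx, hy] at hdetA
        norm_num at hdetA
      have hsg := sign_lemma c1 (n*c2-d2) c2 (c1*(n*a2-b2) + d1*(n*c2-d2))
        (c1*a2 + d1*c2) hrel (Or.inr hc2) hAnz
      have hsgR := congrArg (fun z : ℤ => (z:ℝ)) hsg
      push_cast at hsgR
      linarith [hsgR]

theorem cocycle (a1 b1 c1 d1 a2 b2 c2 d2 : ℤ) (h1 : a1*d1 - b1*c1 = 1)
    (h2 : a2*d2 - b2*c2 = 1) :
    Phi (a1*a2 + b1*c2) (a1*b2 + b1*d2) (c1*a2 + d1*c2) (c1*b2 + d1*d2)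
      = Phi a1 b1 c1 d1 + Phi a2 b2 c2 d2 - 3 * ((c1*c2*(c1*a2 + d1*c2)).sign : ℝ) :=
  cocycle_aux c2.natAbs a1 b1 c1 d1 a2 b2 c2 d2 le_rfl h1 h2



theorem stmt_8 (b d : ℕ) (hb : 0 < b) (hd : 0 < d) (a c : ℤ)
    (hab : IsCoprime a (b : ℤ)) (hcd : IsCoprime c (d : ℤ))
    (hne : (a : ℝ) / b ≠ (c : ℝ) / d)
    (q : ℤ) (hq : q = a * d - b * c)
    (j k : ℤ) (hjk : -c * j + d * k = 1)
    (r : ℤ) (hr : r = a * j - b * k) :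
    S a b = S c d + (q.sign : ℝ) * S r q.natAbs
      + ((b : ℝ) ^ 2 + (d : ℝ) ^ 2 + (q : ℝ) ^ 2) / ((b : ℝ) * d * q)
      - 3 * (q.sign : ℝ) := by
  obtain ⟨u, v, huv⟩ := hab
  have hjk' : (d:ℤ)*k - c*j = 1 := by linarith
  have hbR : (0:ℝ) < (b:ℝ) := by exact_mod_cast hb
  have hdR : (0:ℝ) < (d:ℝ) := by exact_mod_cast hd
  have hbz : ((b:ℕ):ℤ) ≠ 0 := by exact_mod_cast hb.ne'
  have hdz : ((d:ℕ):ℤ) ≠ 0 := by exact_mod_cast hd.ne'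
  have hq0 : q ≠ 0 := by
    intro h0
    apply hne
    have h1 : a*d = (b:ℤ)*c := by linarith [hq ▸ h0.symm.le]
    have hR : (a:ℝ)*(d:ℝ) = (b:ℝ)*(c:ℝ) := by exact_mod_cast h1
    field_simp
    linarith [hR]
  have hqR : ((q:ℤ):ℝ) ≠ 0 := Int.cast_ne_zero.mpr hq0
  -- determinants
  have hdet2 : (-j)*c - (-k)*(d:ℤ) = 1 := by linarith
  have hdet1 : (u*c+v*d)*(-r) - (u*k+v*j)*(-q) = 1 := by
    linear_combination (-(u*c+v*(d:ℤ)))*hr + (u*k+v*j)*hq + ((d:ℤ)*k-c*j)*huv + hjk'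
  have hco := cocycle (u*c+v*d) (u*k+v*j) (-q) (-r) (-j) (-k) (d:ℤ) c hdet1 hdet2
  have e1 : (u*c+v*(d:ℤ))*(-j) + (u*k+v*j)*(d:ℤ) = u := by linear_combination u*hjk'
  have e2 : (u*c+v*(d:ℤ))*(-k) + (u*k+v*j)*c = -v := by linear_combination (-v)*hjk'
  have e3 : (-q)*(-j) + (-r)*(d:ℤ) = (b:ℤ) := by
    linear_combination j*hq + (-(d:ℤ))*hr + (b:ℤ)*hjk'
  have e4 : (-q)*(-k) + (-r)*c = a := by
    linear_combination k*hq + (-c)*hr + a*hjk'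
  rw [e1, e2, e3, e4] at hco
  -- unfold the three Phi values
  have hPhiA : Phi u (-v) (b:ℤ) a = ((u:ℝ) + (a:ℝ))/(b:ℝ) - S a b := by
    unfold Phi
    rw [if_neg hbz, Int.sign_eq_one_of_pos (by exact_mod_cast hb), Int.natAbs_natCast]
    push_cast
    ring
  have hPhiC : Phi (-j) (-k) (d:ℤ) c = (-(j:ℝ) + (c:ℝ))/(d:ℝ) - S c d := by
    unfold Phi
    rw [if_neg hdz, Int.sign_eq_one_of_pos (by exact_mod_cast hd), Int.natAbs_natCast]
    push_cast
    ring
  have hPhiR : Phi (u*c+v*d) (u*k+v*j) (-q) (-r)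
      = (((u*c+v*(d:ℤ)):ℝ) - (r:ℝ))/(-(q:ℝ)) - (q.sign:ℝ) * S r q.natAbs := by
    unfold Phi
    rw [if_neg (neg_ne_zero.mpr hq0), Int.sign_neg, Int.natAbs_neg, S_neg]
    push_cast
    ring
  have hsgn : ((-q*(d:ℤ)*(b:ℤ)).sign:ℝ) = -(q.sign:ℝ) := by
    rw [Int.sign_mul, Int.sign_mul, Int.sign_neg,
      Int.sign_eq_one_of_pos (show (0:ℤ) < (d:ℤ) by exact_mod_cast hd),
      Int.sign_eq_one_of_pos (show (0:ℤ) < (b:ℤ) by exact_mod_cast hb)]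
    push_cast
    ring
  rw [hPhiA, hPhiC, hPhiR, hsgn, div_neg] at hco
  -- the rational defect
  have hkey : ((u:ℝ) + (a:ℝ))/(b:ℝ) + ((((u*c+v*(d:ℤ)):ℝ) - (r:ℝ))/(q:ℝ))
      - ((-(j:ℝ) + (c:ℝ))/(d:ℝ))
      = ((b:ℝ)^2 + (d:ℝ)^2 + (q:ℝ)^2)/((b:ℝ)*(d:ℝ)*(q:ℝ)) := by
    have huvR : (u:ℝ)*(a:ℝ) + (v:ℝ)*(b:ℝ) = 1 := by exact_mod_cast huv
    have hjkR : (d:ℝ)*(k:ℝ) - (c:ℝ)*(j:ℝ) = 1 := by exact_mod_cast hjk'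
    have hqR' : (q:ℝ) = (a:ℝ)*(d:ℝ) - (b:ℝ)*(c:ℝ) := by exact_mod_cast hq
    have hrR : (r:ℝ) = (a:ℝ)*(j:ℝ) - (b:ℝ)*(k:ℝ) := by exact_mod_cast hr
    have hbdq : (b:ℝ)*(d:ℝ)*(q:ℝ) ≠ 0 := by
      apply mul_ne_zero (mul_ne_zero hbR.ne' hdR.ne') hqR
    have t1 : ((u:ℝ) + (a:ℝ))/(b:ℝ) = (((u:ℝ)+(a:ℝ))*((d:ℝ)*(q:ℝ)))/((b:ℝ)*(d:ℝ)*(q:ℝ)) := by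
      rw [eq_div_iff hbdq]
      field_simp
    have t2 : (((u*c+v*(d:ℤ)):ℝ) - (r:ℝ))/(q:ℝ)
        = ((((u*c+v*(d:ℤ)):ℝ) - (r:ℝ))*((b:ℝ)*(d:ℝ)))/((b:ℝ)*(d:ℝ)*(q:ℝ)) := by
      rw [eq_div_iff hbdq]
      field_simp
    have t3 : (-(j:ℝ) + (c:ℝ))/(d:ℝ)
        = ((-(j:ℝ) + (c:ℝ))*((b:ℝ)*(q:ℝ)))/((b:ℝ)*(d:ℝ)*(q:ℝ)) := by
      rw [eq_div_iff hbdq]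
      field_simp
    rw [t1, t2, t3, ← add_div, div_sub_div_same]
    have hnum : ((u:ℝ)+(a:ℝ))*((d:ℝ)*(q:ℝ)) + (((u*c+v*(d:ℤ)):ℝ) - (r:ℝ))*((b:ℝ)*(d:ℝ))
        - (-(j:ℝ) + (c:ℝ))*((b:ℝ)*(q:ℝ)) = (b:ℝ)^2 + (d:ℝ)^2 + (q:ℝ)^2 := by
      push_cast
      linear_combination ((d:ℝ)^2)*huvR + ((b:ℝ)^2)*hjkR
        + ((d:ℝ)*(u:ℝ) - (q:ℝ) + (b:ℝ)*(j:ℝ))*hqR' + (-(b:ℝ)*(d:ℝ))*hrR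
    rw [hnum]
  linarith [hco, hkey]
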